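/- Let a_p†, a_p be fermionic creation/annihilation operators on N modes (realized via the Jordan–Wigner transform on ℂ^(2^N)). Then the operator Σ over all ordered k-tuples p of distinct modes and q of distinct modes of (a_{p_1}†⋯a_{p_k}† a_{q_1}⋯a_{q_k})†(a_{p_1}†⋯a_{p_k}† a_{q_1}⋯a_{q_k}), restricted to the η-particle sector, acts as the scalar k!²·C(η,k)·C(N−η+k,k) times the identity. -/
import Mathlib

open Matrix Finset

section AuxKRDM
variable {N : ℕ}
private abbrev MatN (N : ℕ) := Matrix (Fin N → Bool) (Fin N → Bool) ℂ



private lemma sqZero (b : Fin N → MatN N) (hb : ∀ x y, b x * b y + b y * b x = 0)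
    (x : Fin N) : b x * b x = 0 := by
  have h2 : (2 : ℂ) • (b x * b x) = 0 := by
    rw [two_smul]; exact hb x x
  rcases smul_eq_zero.mp h2 with h | h
  · norm_num at h
  · exact h

private lemma memProdZero (b : Fin N → MatN N) (hb : ∀ x y, b x * b y + b y * b x = 0) :
    ∀ (t : List (Fin N)) (x : Fin N), x ∈ t → b x * (t.map b).prod = 0 := by
  intro t
  induction t with
  | nil => simp
  | cons y s ih =>
    intro x hx
    rcases List.mem_cons.mp hx with h | h
    · subst h
      rw [List.map_cons, List.prod_cons, ← mul_assoc, sqZero b hb x, zero_mul]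
    · have hxy : b x * b y = -(b y * b x) := eq_neg_of_add_eq_zero_left (hb x y)
      rw [List.map_cons, List.prod_cons, ← mul_assoc, hxy, neg_mul, mul_assoc,
        ih x h, mul_zero, neg_zero]

private lemma notNodupProdZero (b : Fin N → MatN N)
    (hb : ∀ x y, b x * b y + b y * b x = 0) :
    ∀ (t : List (Fin N)), ¬ t.Nodup → (t.map b).prod = 0 := by
  intro t
  induction t with
  | nil => intro h; exact absurd List.nodup_nil h
  | cons y s ih =>
    intro h
    rw [List.nodup_cons] at h
    push_neg at h
    by_cases hy : y ∈ s
    · rw [List.map_cons, List.prod_cons]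
      exact memProdZero b hb s y hy
    · rw [List.map_cons, List.prod_cons, ih (h hy), mul_zero]

private lemma nonInjProdZero (b : Fin N → MatN N)
    (hb : ∀ x y, b x * b y + b y * b x = 0) {k : ℕ}
    (q : Fin k → Fin N) (h : ¬ Function.Injective q) :
    (List.ofFn (fun i => b (q i))).prod = 0 := by
  have hmap : (List.ofFn q).map b = List.ofFn (fun i => b (q i)) := by
    rw [List.map_ofFn]; rfl
  rw [← hmap]
  apply notNodupProdZero b hb
  rw [List.nodup_ofFn]
  exact h



private lemma commA (a : Fin N → MatN N)
    (hCAR₁ : ∀ p q, a p * (a q)ᴴ + (a q)ᴴ * a p = if p = q then (1 : MatN N) else 0)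
    (hCAR₂ : ∀ p q, a p * a q + a q * a p = 0) (r : Fin N) :
    (∑ p, (a p)ᴴ * a p) * a r = a r * (∑ p, (a p)ᴴ * a p) - a r := by
  rw [Finset.sum_mul, Finset.mul_sum]
  have key : ∀ p, (a p)ᴴ * a p * a r
      = a r * ((a p)ᴴ * a p) - (if r = p then a p else 0) := by
    intro p
    have h1 : a p * a r = -(a r * a p) := eq_neg_of_add_eq_zero_left (hCAR₂ p r)
    have h2 : (a p)ᴴ * a r = (if r = p then 1 else 0) - a r * (a p)ᴴ :=
      eq_sub_of_add_eq' (hCAR₁ r p)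
    rw [mul_assoc, h1, mul_neg, ← mul_assoc, h2, sub_mul]
    split_ifs <;> noncomm_ring
  rw [Finset.sum_congr rfl (fun p _ => key p), Finset.sum_sub_distrib,
    Finset.sum_ite_eq]
  simp

private lemma nSelfAdj (a : Fin N → MatN N) :
    (∑ p, (a p)ᴴ * a p)ᴴ = (∑ p, (a p)ᴴ * a p) := by
  rw [Matrix.conjTranspose_sum]
  exact Finset.sum_congr rfl (fun p _ => by
    rw [Matrix.conjTranspose_mul, Matrix.conjTranspose_conjTranspose])

private lemma commAd (a : Fin N → MatN N)
    (hCAR₁ : ∀ p q, a p * (a q)ᴴ + (a q)ᴴ * a p = if p = q then (1 : MatN N) else 0)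
    (hCAR₂ : ∀ p q, a p * a q + a q * a p = 0) (r : Fin N) :
    (∑ p, (a p)ᴴ * a p) * (a r)ᴴ = (a r)ᴴ * (∑ p, (a p)ᴴ * a p) + (a r)ᴴ := by
  have h := congrArg Matrix.conjTranspose (commA a hCAR₁ hCAR₂ r)
  rw [Matrix.conjTranspose_mul, Matrix.conjTranspose_sub, Matrix.conjTranspose_mul,
    nSelfAdj a] at h
  rw [eq_sub_iff_add_eq] at h
  rw [← h]

private lemma sumAAd (a : Fin N → MatN N)
    (hCAR₁ : ∀ p q, a p * (a q)ᴴ + (a q)ᴴ * a p = if p = q then (1 : MatN N) else 0) :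
    (∑ r, a r * (a r)ᴴ) = (N : ℂ) • 1 - (∑ p, (a p)ᴴ * a p) := by
  have key : ∀ r, a r * (a r)ᴴ = 1 - (a r)ᴴ * a r := by
    intro r
    have h := hCAR₁ r r
    simp only [if_pos rfl] at h
    exact eq_sub_of_add_eq h
  rw [Finset.sum_congr rfl (fun r _ => key r), Finset.sum_sub_distrib]
  congr 1
  rw [Finset.sum_const, Finset.card_univ, Fintype.card_fin,
    ← Nat.cast_smul_eq_nsmul ℂ]



private lemma sumMulVec {ι : Type*} (s : Finset ι) (f : ι → MatN N) (w : (Fin N → Bool) → ℂ) :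
    (∑ i ∈ s, f i).mulVec w = ∑ i ∈ s, (f i).mulVec w := by
  ext x
  simp only [Matrix.mulVec, dotProduct, Matrix.sum_apply, Finset.sum_mul]
  rw [Finset.sum_comm]
  simp [Matrix.mulVec, dotProduct]

-- eigen shift lemmas, assuming the commutation relations abstractly
private lemma eigShift (n A : MatN N) (c : ℂ) (hcomm : n * A = A * n + c • A)
    (w : (Fin N → Bool) → ℂ) (m : ℂ) (hw : n.mulVec w = m • w) :
    n.mulVec (A.mulVec w) = (m + c) • A.mulVec w := by
  rw [Matrix.mulVec_mulVec, hcomm, Matrix.add_mulVec, ← Matrix.mulVec_mulVec, hw,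
    Matrix.mulVec_smul, Matrix.smul_mulVec, add_smul]

private lemma sumCC (a : Fin N → MatN N)
    (hcommAd : ∀ r, (∑ p, (a p)ᴴ * a p) * (a r)ᴴ = (a r)ᴴ * (∑ p, (a p)ᴴ * a p) + (a r)ᴴ)
    (hsumAAd : (∑ r, a r * (a r)ᴴ) = (N : ℂ) • 1 - (∑ p, (a p)ᴴ * a p)) :
    ∀ (j : ℕ) (w : (Fin N → Bool) → ℂ) (m : ℂ),
    (∑ p, (a p)ᴴ * a p).mulVec w = m • w →
    (∑ p : Fin j → Fin N,
      (((List.ofFn fun i => (a (p i))ᴴ).prod)ᴴ * (List.ofFn fun i => (a (p i))ᴴ).prod)).mulVec w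
      = (∏ i ∈ Finset.range j, ((N : ℂ) - m - i)) • w := by
  intro j
  induction j with
  | zero =>
    intro w m hw
    simp
  | succ j ih =>
    intro w m hw
    set F : (Fin (j+1) → Fin N) → MatN N := fun p =>
      ((List.ofFn fun i => (a (p i))ᴴ).prod)ᴴ * (List.ofFn fun i => (a (p i))ᴴ).prod with hF
    have hre : ∑ p : Fin (j+1) → Fin N, F p
        = ∑ r : Fin N, ∑ p : Fin j → Fin N, F (Fin.snoc p r : Fin (j+1) → Fin N) :=
      calc ∑ p : Fin (j+1) → Fin N, F p
          = ∑ x : Fin N × (Fin j → Fin N), F (Fin.snoc x.2 x.1 : Fin (j+1) → Fin N) :=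
            (Fintype.sum_equiv (Fin.snocEquiv (fun _ => Fin N)) _ F (fun x => rfl)).symm
        _ = ∑ r : Fin N, ∑ p : Fin j → Fin N, F (Fin.snoc p r : Fin (j+1) → Fin N) :=
            Fintype.sum_prod_type _
    have hterm : ∀ (p : Fin j → Fin N) (r : Fin N),
        F (Fin.snoc p r : Fin (j+1) → Fin N) = a r *
          (((List.ofFn fun i => (a (p i))ᴴ).prod)ᴴ * (List.ofFn fun i => (a (p i))ᴴ).prod)
          * (a r)ᴴ := by
      intro p r
      have hofn : (List.ofFn fun i : Fin (j+1) => (a ((Fin.snoc p r : Fin (j+1) → Fin N) i))ᴴ).prod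
          = (List.ofFn fun i : Fin j => (a (p i))ᴴ).prod * (a r)ᴴ := by
        rw [List.ofFn_succ', List.concat_eq_append, List.prod_append, List.prod_cons,
          List.prod_nil, mul_one, Fin.snoc_last]
        simp only [Fin.snoc_castSucc]
      rw [hF]
      simp only [hofn, Matrix.conjTranspose_mul, Matrix.conjTranspose_conjTranspose]
      noncomm_ring
    have hre2 : ∑ p : Fin (j+1) → Fin N, F p
        = ∑ r : Fin N, a r *
          (∑ p : Fin j → Fin N,
            (((List.ofFn fun i => (a (p i))ᴴ).prod)ᴴ * (List.ofFn fun i => (a (p i))ᴴ).prod))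
          * (a r)ᴴ := by
      rw [hre]
      refine Finset.sum_congr rfl (fun r _ => ?_)
      rw [Finset.mul_sum, Finset.sum_mul]
      exact Finset.sum_congr rfl (fun p _ => hterm p r)
    rw [hre2, sumMulVec]
    have hc : ∀ r : Fin N,
        (a r * (∑ p : Fin j → Fin N,
            (((List.ofFn fun i => (a (p i))ᴴ).prod)ᴴ * (List.ofFn fun i => (a (p i))ᴴ).prod))
          * (a r)ᴴ).mulVec w
        = (∏ i ∈ Finset.range j, ((N : ℂ) - (m + 1) - i)) • (a r * (a r)ᴴ).mulVec w := by
      intro r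
      have heig : (∑ p, (a p)ᴴ * a p).mulVec ((a r)ᴴ.mulVec w)
          = (m + 1) • (a r)ᴴ.mulVec w := by
        apply eigShift _ _ 1 _ w m hw
        rw [one_smul]; exact hcommAd r
      have := ih ((a r)ᴴ.mulVec w) (m + 1) heig
      rw [mul_assoc, ← Matrix.mulVec_mulVec, ← Matrix.mulVec_mulVec, this,
        Matrix.mulVec_smul, Matrix.mulVec_mulVec]
    rw [Finset.sum_congr rfl (fun r _ => hc r), ← Finset.smul_sum, ← sumMulVec, hsumAAd,
      Matrix.sub_mulVec, Matrix.smul_mulVec, Matrix.one_mulVec, hw, ← sub_smul,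
      smul_smul]
    congr 1
    rw [Finset.prod_range_succ']
    have : ∀ i ∈ Finset.range j, ((N : ℂ) - m - ((i : ℕ) + 1 : ℕ))
        = ((N : ℂ) - (m + 1) - (i : ℕ)) := by
      intro i _
      push_cast
      ring
    rw [Finset.prod_congr rfl this]
    push_cast
    ring


private lemma sumMulVec' {ι : Type*} (s : Finset ι) (f : ι → MatN N) (w : (Fin N → Bool) → ℂ) :
    (∑ i ∈ s, f i).mulVec w = ∑ i ∈ s, (f i).mulVec w := by
  ext x
  simp only [Matrix.mulVec, dotProduct, Matrix.sum_apply, Finset.sum_mul]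
  rw [Finset.sum_comm]
  simp [Matrix.mulVec, dotProduct]

private lemma eigShift' (n A : MatN N) (c : ℂ) (hcomm : n * A = A * n + c • A)
    (w : (Fin N → Bool) → ℂ) (m : ℂ) (hw : n.mulVec w = m • w) :
    n.mulVec (A.mulVec w) = (m + c) • A.mulVec w := by
  rw [Matrix.mulVec_mulVec, hcomm, Matrix.add_mulVec, ← Matrix.mulVec_mulVec, hw,
    Matrix.mulVec_smul, Matrix.smul_mulVec, add_smul]

private lemma sumBSB (a : Fin N → MatN N)
    (hcommA : ∀ r, (∑ p, (a p)ᴴ * a p) * a r = a r * (∑ p, (a p)ᴴ * a p) - a r)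
    (S : MatN N) (k : ℕ)
    (hS : ∀ (w : (Fin N → Bool) → ℂ) (m : ℂ), (∑ p, (a p)ᴴ * a p).mulVec w = m • w →
      S.mulVec w = (∏ i ∈ Finset.range k, ((N : ℂ) - m - i)) • w) :
    ∀ (j : ℕ) (w : (Fin N → Bool) → ℂ) (m : ℂ),
    (∑ p, (a p)ᴴ * a p).mulVec w = m • w →
    (∑ q : Fin j → Fin N,
      (((List.ofFn fun i => a (q i)).prod)ᴴ * S * (List.ofFn fun i => a (q i)).prod)).mulVec w
      = ((∏ i ∈ Finset.range j, (m - i)) *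
         ∏ i ∈ Finset.range k, ((N : ℂ) - (m - j) - i)) • w := by
  intro j
  induction j with
  | zero =>
    intro w m hw
    simp only [Finset.range_zero, Finset.prod_empty, one_mul]
    have : (∑ q : Fin 0 → Fin N,
        (((List.ofFn fun i => a (q i)).prod)ᴴ * S * (List.ofFn fun i => a (q i)).prod)) = S := by
      simp
    rw [this, hS w m hw]
    norm_num
  | succ j ih =>
    intro w m hw
    set G : (Fin (j+1) → Fin N) → MatN N := fun q =>
      ((List.ofFn fun i => a (q i)).prod)ᴴ * S * (List.ofFn fun i => a (q i)).prod with hG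
    have hre : ∑ q : Fin (j+1) → Fin N, G q
        = ∑ r : Fin N, ∑ q : Fin j → Fin N, G (Fin.snoc q r : Fin (j+1) → Fin N) :=
      calc ∑ q : Fin (j+1) → Fin N, G q
          = ∑ x : Fin N × (Fin j → Fin N), G (Fin.snoc x.2 x.1 : Fin (j+1) → Fin N) :=
            (Fintype.sum_equiv (Fin.snocEquiv (fun _ => Fin N)) _ G (fun x => rfl)).symm
        _ = ∑ r : Fin N, ∑ q : Fin j → Fin N, G (Fin.snoc q r : Fin (j+1) → Fin N) :=
            Fintype.sum_prod_type _
    have hterm : ∀ (q : Fin j → Fin N) (r : Fin N),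
        G (Fin.snoc q r : Fin (j+1) → Fin N) = (a r)ᴴ *
          (((List.ofFn fun i => a (q i)).prod)ᴴ * S * (List.ofFn fun i => a (q i)).prod)
          * a r := by
      intro q r
      have hofn : (List.ofFn fun i : Fin (j+1) => a ((Fin.snoc q r : Fin (j+1) → Fin N) i)).prod
          = (List.ofFn fun i : Fin j => a (q i)).prod * a r := by
        rw [List.ofFn_succ', List.concat_eq_append, List.prod_append, List.prod_cons,
          List.prod_nil, mul_one, Fin.snoc_last]
        simp only [Fin.snoc_castSucc]
      rw [hG]
      simp only [hofn, Matrix.conjTranspose_mul]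
      noncomm_ring
    have hre2 : ∑ q : Fin (j+1) → Fin N, G q
        = ∑ r : Fin N, (a r)ᴴ *
          (∑ q : Fin j → Fin N,
            (((List.ofFn fun i => a (q i)).prod)ᴴ * S * (List.ofFn fun i => a (q i)).prod))
          * a r := by
      rw [hre]
      refine Finset.sum_congr rfl (fun r _ => ?_)
      rw [Finset.mul_sum, Finset.sum_mul]
      exact Finset.sum_congr rfl (fun q _ => hterm q r)
    rw [hre2, sumMulVec']
    have hc : ∀ r : Fin N,
        ((a r)ᴴ * (∑ q : Fin j → Fin N,
            (((List.ofFn fun i => a (q i)).prod)ᴴ * S * (List.ofFn fun i => a (q i)).prod))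
          * a r).mulVec w
        = ((∏ i ∈ Finset.range j, ((m - 1) - i)) *
           ∏ i ∈ Finset.range k, ((N : ℂ) - ((m - 1) - j) - i)) • ((a r)ᴴ * a r).mulVec w := by
      intro r
      have heig : (∑ p, (a p)ᴴ * a p).mulVec ((a r).mulVec w)
          = (m + (-1)) • (a r).mulVec w := by
        apply eigShift' _ _ (-1) _ w m hw
        rw [neg_one_smul, ← sub_eq_add_neg]
        exact hcommA r
      have hih := ih ((a r).mulVec w) (m - 1) (by rw [← sub_eq_add_neg] at heig; exact heig)
      rw [mul_assoc, ← Matrix.mulVec_mulVec, ← Matrix.mulVec_mulVec, hih,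
        Matrix.mulVec_smul, Matrix.mulVec_mulVec]
    rw [Finset.sum_congr rfl (fun r _ => hc r), ← Finset.smul_sum, ← sumMulVec', hw,
      smul_smul]
    congr 1
    rw [Finset.prod_range_succ']
    have h1 : ∀ i ∈ Finset.range j, (m - ((i : ℕ) + 1 : ℕ) : ℂ) = ((m - 1) - (i : ℕ)) := by
      intro i _
      push_cast
      ring
    rw [Finset.prod_congr rfl h1]
    have h2 : ∀ i ∈ Finset.range k,
        ((N : ℂ) - ((m - 1) - j) - i) = ((N : ℂ) - (m - ((j : ℕ) + 1 : ℕ)) - i) := by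
      intro i _
      push_cast
      ring
    rw [Finset.prod_congr rfl h2]
    push_cast
    ring

end AuxKRDM

/-- Let `a p` be fermionic annihilation operators on `N` modes acting on the
Fock space `ℂ^(2^N)` (e.g. realized via the Jordan–Wigner transform), satisfying
the canonical anticommutation relations. Then the operator
`Σ_{p,q} (a_{p₁}†⋯a_{p_k}† a_{q₁}⋯a_{q_k})† (a_{p₁}†⋯a_{p_k}† a_{q₁}⋯a_{q_k})`,
summed over all ordered `k`-tuples `p` of distinct modes and `q` of distinct
modes, acts on the `η`-particle sector (the `η`-eigenspace of the number
operator) as the scalar `k!² · C(η,k) · C(N−η+k,k)` times the identity. -/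
theorem kRDM_operator_sum_on_particle_sector (N k η : ℕ)
    (hkη : k ≤ η) (hηN : η ≤ N)
    (a : Fin N → Matrix (Fin N → Bool) (Fin N → Bool) ℂ)
    (hCAR₁ : ∀ p q, a p * (a q)ᴴ + (a q)ᴴ * a p =
      if p = q then (1 : Matrix (Fin N → Bool) (Fin N → Bool) ℂ) else 0)
    (hCAR₂ : ∀ p q, a p * a q + a q * a p = 0)
    (v : (Fin N → Bool) → ℂ)
    (hv : (∑ p, (a p)ᴴ * a p).mulVec v = (η : ℂ) • v) :
    (∑ p ∈ Finset.univ.filter (fun p : Fin k → Fin N => Function.Injective p),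
      ∑ q ∈ Finset.univ.filter (fun q : Fin k → Fin N => Function.Injective q),
        (let A := (List.ofFn (fun i => (a (p i))ᴴ)).prod *
          (List.ofFn (fun i => a (q i))).prod;
        Aᴴ * A)).mulVec v =
      ((k.factorial ^ 2 * η.choose k * (N - η + k).choose k : ℕ) : ℂ) • v := by
  have hCAR₂' : ∀ x y, (a x)ᴴ * (a y)ᴴ + (a y)ᴴ * (a x)ᴴ = 0 := by
    intro x y
    have h := congrArg Matrix.conjTranspose (hCAR₂ y x)
    simpa [Matrix.conjTranspose_add, Matrix.conjTranspose_mul] using h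
  -- remove the injectivity filters: non-injective terms vanish
  have step1 :
      (∑ p ∈ Finset.univ.filter (fun p : Fin k → Fin N => Function.Injective p),
        ∑ q ∈ Finset.univ.filter (fun q : Fin k → Fin N => Function.Injective q),
          (let A := (List.ofFn (fun i => (a (p i))ᴴ)).prod *
            (List.ofFn (fun i => a (q i))).prod;
          Aᴴ * A))
      = ∑ p : Fin k → Fin N, ∑ q : Fin k → Fin N,
          (((List.ofFn (fun i => (a (p i))ᴴ)).prod * (List.ofFn (fun i => a (q i))).prod)ᴴ *
           ((List.ofFn (fun i => (a (p i))ᴴ)).prod * (List.ofFn (fun i => a (q i))).prod)) := by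
    show (∑ p ∈ Finset.univ.filter (fun p : Fin k → Fin N => Function.Injective p),
        ∑ q ∈ Finset.univ.filter (fun q : Fin k → Fin N => Function.Injective q),
          (((List.ofFn (fun i => (a (p i))ᴴ)).prod * (List.ofFn (fun i => a (q i))).prod)ᴴ *
           ((List.ofFn (fun i => (a (p i))ᴴ)).prod * (List.ofFn (fun i => a (q i))).prod))) = _
    rw [Finset.sum_subset (Finset.filter_subset _ Finset.univ)]
    · refine Finset.sum_congr rfl (fun p _ => ?_)
      rw [Finset.sum_subset (Finset.filter_subset _ Finset.univ)]
      intro q _ hq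
      rw [Finset.mem_filter] at hq
      push_neg at hq
      have hB : (List.ofFn (fun i => a (q i))).prod = 0 :=
        nonInjProdZero a hCAR₂ q (hq (Finset.mem_univ q))
      rw [hB, mul_zero]
      simp
    · intro p _ hp
      rw [Finset.mem_filter] at hp
      push_neg at hp
      have hC : (List.ofFn (fun i => (a (p i))ᴴ)).prod = 0 :=
        nonInjProdZero (fun x => (a x)ᴴ) hCAR₂' p (hp (Finset.mem_univ p))
      refine Finset.sum_eq_zero (fun q _ => ?_)
      rw [hC, zero_mul]
      simp
  -- reorganize into  Σ_q  Bᴴ (Σ_p Cᴴ C) B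
  have step2 :
      (∑ p : Fin k → Fin N, ∑ q : Fin k → Fin N,
          (((List.ofFn (fun i => (a (p i))ᴴ)).prod * (List.ofFn (fun i => a (q i))).prod)ᴴ *
           ((List.ofFn (fun i => (a (p i))ᴴ)).prod * (List.ofFn (fun i => a (q i))).prod)))
      = ∑ q : Fin k → Fin N,
          (((List.ofFn (fun i => a (q i))).prod)ᴴ *
            (∑ p : Fin k → Fin N,
              (((List.ofFn fun i => (a (p i))ᴴ).prod)ᴴ * (List.ofFn fun i => (a (p i))ᴴ).prod)) *
            (List.ofFn (fun i => a (q i))).prod) := by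
    rw [Finset.sum_comm]
    refine Finset.sum_congr rfl (fun q _ => ?_)
    rw [Finset.mul_sum, Finset.sum_mul]
    refine Finset.sum_congr rfl (fun p _ => ?_)
    rw [Matrix.conjTranspose_mul]
    noncomm_ring
  rw [step1, step2]
  have hS := sumCC a (commAd a hCAR₁ hCAR₂) (sumAAd a hCAR₁)
  have main := sumBSB a (commA a hCAR₁ hCAR₂) _ k (hS k) k v (η : ℂ) hv
  rw [main]
  congr 1
  -- scalar arithmetic
  have e1 : (∏ i ∈ Finset.range k, ((η : ℂ) - i)) = ((η.descFactorial k : ℕ) : ℂ) := by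
    rw [Nat.descFactorial_eq_prod_range, Nat.cast_prod]
    refine Finset.prod_congr rfl (fun i hi => ?_)
    rw [Nat.cast_sub ((Finset.mem_range.mp hi).le.trans hkη)]
  have e2 : (∏ i ∈ Finset.range k, ((N : ℂ) - ((η : ℂ) - (k : ℕ)) - i))
      = (((N - η + k).descFactorial k : ℕ) : ℂ) := by
    rw [Nat.descFactorial_eq_prod_range, Nat.cast_prod]
    refine Finset.prod_congr rfl (fun i hi => ?_)
    have hik : i ≤ N - η + k := (Finset.mem_range.mp hi).le.trans (Nat.le_add_left k (N - η))
    rw [Nat.cast_sub hik, Nat.cast_add, Nat.cast_sub hηN]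
    ring
  rw [e1, e2, ← Nat.cast_mul]
  have e3 : η.descFactorial k * (N - η + k).descFactorial k
      = k.factorial ^ 2 * η.choose k * (N - η + k).choose k := by
    rw [Nat.descFactorial_eq_factorial_mul_choose, Nat.descFactorial_eq_factorial_mul_choose]
    ring
  rw [e3]
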